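/- arXiv:1604.05745 — 3 statements merged into one kernel-verified Lean document; each statement's English description precedes it below -/
import Mathlib

section
/- Define the 3×3 complex matrices A₁, A₂, A₃ as in the torsion operators above. If tr(AᵢAⱼ) = 0 for all 1 ≤ i, j ≤ 3 (equivalently bᵢ² = aⱼaₖ and aₖbₖ = bᵢbⱼ for all cyclic permutations), and additionally b₁ = 0, then AₗAₘ = 0 for all l, m. -/
/-- The three torsion operators `A_{e_i}` of a balanced Hermitian threefold. -/
def torsionOps (a₁ a₂ a₃ b₁ b₂ b₃ : ℂ) : Fin 3 → Matrix (Fin 3) (Fin 3) ℂ :=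
  ![!![0, 0, 0; b₂, b₁, a₃; -b₃, -a₂, -b₁],
    !![-b₂, -b₁, -a₃; 0, 0, 0; a₁, b₃, b₂],
    !![b₃, a₂, b₁; -a₁, -b₃, -b₂; 0, 0, 0]]

set_option maxHeartbeats 2000000 in
theorem stmt_7 (a₁ a₂ a₃ b₁ b₂ b₃ : ℂ)
    (htr : ∀ i j : Fin 3,
      (torsionOps a₁ a₂ a₃ b₁ b₂ b₃ i * torsionOps a₁ a₂ a₃ b₁ b₂ b₃ j).trace = 0)
    (hb1 : b₁ = 0) :
    ∀ l m : Fin 3,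
      torsionOps a₁ a₂ a₃ b₁ b₂ b₃ l * torsionOps a₁ a₂ a₃ b₁ b₂ b₃ m = 0 := by
  subst hb1
  have e1 := htr 0 0
  have e4 := htr 0 1
  have e3 := htr 0 2
  have e5 := htr 1 1
  have e2 := htr 1 2
  have e6 := htr 2 2
  simp [torsionOps, Matrix.mul_fin_three, Matrix.trace_fin_three, -mul_eq_zero] at e1 e2 e3 e4 e5 e6
  intro l m
  fin_cases l <;> fin_cases m <;>
    · ext i j
      fin_cases i <;> fin_cases j <;>
        simp [torsionOps, Matrix.mul_fin_three, -mul_eq_zero] <;>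
        first
          | ring1
          | linear_combination e1 | linear_combination -e1
          | linear_combination e2 | linear_combination -e2
          | linear_combination e3 | linear_combination -e3
          | linear_combination e4 | linear_combination -e4
          | linear_combination e5 | linear_combination -e5
          | linear_combination e6 | linear_combination -e6
          | linear_combination e1/2 | linear_combination -e1/2
          | linear_combination e2/2 | linear_combination -e2/2
          | linear_combination e3/2 | linear_combination -e3/2
          | linear_combination e4/2 | linear_combination -e4/2
          | linear_combination e5/2 | linear_combination -e5/2
          | linear_combination e6/2 | linear_combination -e6/2
end

section
/- Let J(t) be a differentiable family of 4×4 matrices of the form J_{(a(t),b(t),c(t))} = [[aE, bE+cI],[bE−cI, −aE]] with a²+b²+c² = 1, and let J' and J̇ denote derivatives in two independent parameters. Then the matrix equation J' = J·J̇ holds if and only if the system a' = c·ḃ − b·ċ, b' = a·ċ − c·ȧ, c' = b·ȧ − a·ḃ holds. -/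
/-!
The matrices `J u = Jabc a b c`, `u = (a, b, c)`, represent the imaginary quaternions, so
`J u * J v = J (v × u) - (u ⬝ v) • 1`. Differentiating `|u| = 1` gives `u ⬝ u̇ = 0`, hence
`J u * J u̇ = J (u̇ × u)`. Since `J` is linear, `J' = J (u')`, and since `J` is injective,
`J' = J * J̇` is equivalent to `u' = u̇ × u`.
-/

/-- The matrix `J_{(a,b,c)} = [[aE, bE+cI],[bE−cI, −aE]]` where `E = [[0,1],[−1,0]]`. -/
def Jabc (a b c : ℝ) : Matrix (Fin 4) (Fin 4) ℝ :=
  !![0, a, c, b;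
     -a, 0, -b, c;
     -c, b, 0, -a;
     -b, -c, a, 0]

theorem Jabc_mul_Jabc (a b c x y z : ℝ) :
    Jabc a b c * Jabc x y z =
      Jabc (c * y - b * z) (a * z - c * x) (b * x - a * y) - (a * x + b * y + c * z) • 1 := by
  ext i j
  fin_cases i <;> fin_cases j <;> simp [Jabc, Matrix.mul_apply, Fin.sum_univ_four] <;> ring

theorem Jabc_inj {a b c x y z : ℝ} : Jabc a b c = Jabc x y z ↔ a = x ∧ b = y ∧ c = z := by
  refine ⟨fun h => ⟨?_, ?_, ?_⟩, by rintro ⟨rfl, rfl, rfl⟩; rfl⟩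
  · simpa [Jabc] using congrFun₂ h 0 1
  · simpa [Jabc] using congrFun₂ h 0 3
  · simpa [Jabc] using congrFun₂ h 0 2

section
variable {E : Type*} [NormedAddCommGroup E] [NormedSpace ℝ E]

theorem matrix_of_fderiv_Jabc_apply (a b c : E → ℝ) (p v : E) :
    Matrix.of (fun i j => fderiv ℝ (fun q => Jabc (a q) (b q) (c q) i j) p v) =
      Jabc (fderiv ℝ a p v) (fderiv ℝ b p v) (fderiv ℝ c p v) := by
  ext i j
  fin_cases i <;> fin_cases j <;> simp [Jabc]

theorem mul_fderiv_add_mul_fderiv_add_mul_fderiv_eq_zero {a b c : E → ℝ} {p : E}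
    (ha : DifferentiableAt ℝ a p) (hb : DifferentiableAt ℝ b p) (hc : DifferentiableAt ℝ c p)
    (hunit : ∀ q, a q ^ 2 + b q ^ 2 + c q ^ 2 = 1) (v : E) :
    a p * fderiv ℝ a p v + b p * fderiv ℝ b p v + c p * fderiv ℝ c p v = 0 := by
  have hsum := ((ha.hasFDerivAt.pow 2).add (hb.hasFDerivAt.pow 2)).add (hc.hasFDerivAt.pow 2)
  change HasFDerivAt (fun q => a q ^ 2 + b q ^ 2 + c q ^ 2) _ p at hsum
  rw [show (fun q => a q ^ 2 + b q ^ 2 + c q ^ 2) = fun _ => 1 from funext hunit] at hsum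
  have := congrArg (· v) (hsum.unique (hasFDerivAt_const 1 p))
  simp only [Nat.add_one_sub_one, pow_one, nsmul_eq_mul, Nat.cast_ofNat, add_apply, smul_apply,
    smul_eq_mul, zero_apply] at this
  linarith
end

theorem Jabc_eq_Jabc_mul_Jabc_iff {a b c x y z a' b' c' : ℝ} (horth : a * x + b * y + c * z = 0) :
    Jabc a' b' c' = Jabc a b c * Jabc x y z ↔
      a' = c * y - b * z ∧ b' = a * z - c * x ∧ c' = b * x - a * y := by
  rw [Jabc_mul_Jabc, horth, zero_smul, sub_zero, Jabc_inj]

theorem stmt_13 (a b c : ℝ × ℝ → ℝ)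
    (ha : Differentiable ℝ a) (hb : Differentiable ℝ b) (hc : Differentiable ℝ c)
    (hunit : ∀ p, a p ^ 2 + b p ^ 2 + c p ^ 2 = 1) (p : ℝ × ℝ) :
    letI J : ℝ × ℝ → Matrix (Fin 4) (Fin 4) ℝ := fun q => Jabc (a q) (b q) (c q)
    letI J' : Matrix (Fin 4) (Fin 4) ℝ :=
      Matrix.of fun i j => fderiv ℝ (fun q => J q i j) p (1, 0)
    letI Jdot : Matrix (Fin 4) (Fin 4) ℝ :=
      Matrix.of fun i j => fderiv ℝ (fun q => J q i j) p (0, 1)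
    (J' = J p * Jdot) ↔
      (fderiv ℝ a p (1, 0) = c p * fderiv ℝ b p (0, 1) - b p * fderiv ℝ c p (0, 1) ∧
       fderiv ℝ b p (1, 0) = a p * fderiv ℝ c p (0, 1) - c p * fderiv ℝ a p (0, 1) ∧
       fderiv ℝ c p (1, 0) = b p * fderiv ℝ a p (0, 1) - a p * fderiv ℝ b p (0, 1)) := by
  simp only [matrix_of_fderiv_Jabc_apply]
  exact Jabc_eq_Jabc_mul_Jabc_iff
    (mul_fderiv_add_mul_fderiv_add_mul_fderiv_eq_zero (ha p) (hb p) (hc p) hunit (0, 1))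
end

section
/- Let f : ℂ → ℂ be holomorphic (viewed as a map to ℂ ⊂ ℙ¹) and define β = −i·df/(1+|f|²) and α = (f df̄ − f̄ df)/(2(1+|f|²)). Then, as smooth complex-valued 1-forms, dα = β ∧ β̄ and dβ = 2 β ∧ α. -/
/-!
Writing a complex 1-form as `a dz + b dz̄`, its exterior derivative is `(∂̄a - ∂b) dz̄ ∧ dz`.
Both identities therefore reduce to comparing coefficients of `dz̄ ∧ dz`, which the Wirtinger
calculus computes from `∂̄f = 0`, `∂̄f' = 0` and `∂̄ (1 + |f|²)⁻¹ = -f f̄' / (1 + |f|²)²`.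
-/

/-- Exterior derivative of a complex-valued 1-form `ω` on `ℂ ≅ ℝ²`,
evaluated on constant vector fields: `dω(u,v) = ∂_u(ω(v)) − ∂_v(ω(u))`. -/
noncomputable def extDer (ω : ℂ → ℂ → ℂ) (p u v : ℂ) : ℂ :=
  fderiv ℝ (fun q => ω q v) p u - fderiv ℝ (fun q => ω q u) p v

open ComplexConjugate

noncomputable def wirtingerCLM (P Q : ℂ) : ℂ →L[ℝ] ℂ :=
  P • (1 : ℂ →L[ℝ] ℂ) + Q • (Complex.conjCLE : ℂ →L[ℝ] ℂ)

@[simp]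
lemma wirtingerCLM_apply (P Q w : ℂ) : wirtingerCLM P Q w = P * w + Q * conj w := rfl

/-- `P` and `Q` are the Wirtinger derivatives `∂g` and `∂̄g` at `p`. -/
def HasWirtingerDerivAt (g : ℂ → ℂ) (P Q p : ℂ) : Prop :=
  HasFDerivAt g (wirtingerCLM P Q) p

namespace HasWirtingerDerivAt

variable {g h : ℂ → ℂ} {P Q P' Q' p : ℂ}

lemma of_hasFDerivAt {L : ℂ →L[ℝ] ℂ} (hg : HasFDerivAt g L p)
    (hL : ∀ w, L w = P * w + Q * conj w) : HasWirtingerDerivAt g P Q p := by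
  have hL' : L = wirtingerCLM P Q := by ext1 w; simp [hL]
  rwa [HasWirtingerDerivAt, ← hL']

lemma fderiv_apply (hg : HasWirtingerDerivAt g P Q p) (w : ℂ) :
    fderiv ℝ g p w = P * w + Q * conj w := by
  rw [HasFDerivAt.fderiv hg, wirtingerCLM_apply]

lemma congr_deriv (hg : HasWirtingerDerivAt g P Q p) (hP : P = P') (hQ : Q = Q') :
    HasWirtingerDerivAt g P' Q' p :=
  hP ▸ hQ ▸ hg

lemma const (c : ℂ) : HasWirtingerDerivAt (fun _ => c) 0 0 p :=
  of_hasFDerivAt (hasFDerivAt_const c p) fun w => by simp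

lemma add (hg : HasWirtingerDerivAt g P Q p) (hh : HasWirtingerDerivAt h P' Q' p) :
    HasWirtingerDerivAt (fun q => g q + h q) (P + P') (Q + Q') p :=
  of_hasFDerivAt (HasFDerivAt.add hg hh) fun w => by
    simp only [add_apply, wirtingerCLM_apply]; ring

lemma mul (hg : HasWirtingerDerivAt g P Q p) (hh : HasWirtingerDerivAt h P' Q' p) :
    HasWirtingerDerivAt (fun q => g q * h q) (P * h p + g p * P') (Q * h p + g p * Q') p :=
  of_hasFDerivAt (HasFDerivAt.mul hg hh) fun w => by
    simp only [add_apply, smul_apply, wirtingerCLM_apply, smul_eq_mul]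
    ring

lemma inv (hg : HasWirtingerDerivAt g P Q p) (hp : g p ≠ 0) :
    HasWirtingerDerivAt (fun q => (g q)⁻¹) (-P / g p ^ 2) (-Q / g p ^ 2) p :=
  of_hasFDerivAt ((hasFDerivAt_inv' (𝕜 := ℝ) hp).comp p hg) fun w => by
    simp only [ContinuousLinearMap.neg_comp, neg_apply, ContinuousLinearMap.comp_apply,
      ContinuousLinearMap.mulLeftRight_apply, wirtingerCLM_apply]
    field_simp
    ring

end HasWirtingerDerivAt

lemma HasWirtingerDerivAt.conj {g : ℂ → ℂ} {P Q p : ℂ} (hg : HasWirtingerDerivAt g P Q p) :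
    HasWirtingerDerivAt (fun q => conj (g q)) (conj Q) (conj P) p :=
  of_hasFDerivAt ((Complex.conjCLE : ℂ →L[ℝ] ℂ).hasFDerivAt.comp p hg) fun w => by
    simp only [ContinuousLinearMap.comp_apply, wirtingerCLM_apply, ContinuousLinearEquiv.coe_coe,
      Complex.conjCLE_apply, map_add, map_mul, Complex.conj_conj]
    ring

lemma HasDerivAt.hasWirtingerDerivAt {f : ℂ → ℂ} {f' p : ℂ} (hf : HasDerivAt f f' p) :
    HasWirtingerDerivAt f f' 0 p :=
  HasWirtingerDerivAt.of_hasFDerivAt (hf.hasFDerivAt.restrictScalars ℝ) fun w => by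
    simp [mul_comm]

/-- `d(a dz + b dz̄) = (∂̄a - ∂b) dz̄ ∧ dz`. -/
theorem extDer_eq_of_hasWirtingerDerivAt {ω : ℂ → ℂ → ℂ} {a b : ℂ → ℂ} {p Pa Qa Pb Qb : ℂ}
    (hω : ∀ q u, ω q u = a q * u + b q * conj u)
    (ha : HasWirtingerDerivAt a Pa Qa p) (hb : HasWirtingerDerivAt b Pb Qb p) (u v : ℂ) :
    extDer ω p u v = (Qa - Pb) * (conj u * v - u * conj v) := by
  have hωv : ∀ v, HasWirtingerDerivAt (fun q => ω q v)
      (Pa * v + Pb * conj v) (Qa * v + Qb * conj v) p := fun v => by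
    simp only [hω]
    exact ((ha.mul (.const v)).add (hb.mul (.const (conj v)))).congr_deriv (by ring) (by ring)
  rw [extDer, (hωv v).fderiv_apply, (hωv u).fderiv_apply]
  ring

lemma one_add_mul_conj_ne_zero (z : ℂ) : 1 + z * conj z ≠ 0 := by
  rw [Complex.mul_conj']
  exact_mod_cast (by positivity : (1 + ‖z‖ ^ 2 : ℝ) ≠ 0)

lemma HasDerivAt.hasWirtingerDerivAt_inv_one_add_mul_conj {g : ℂ → ℂ} {g' p : ℂ}
    (hg : HasDerivAt g g' p) :
    HasWirtingerDerivAt (fun q => (1 + g q * conj (g q))⁻¹)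
      (-(g' * conj (g p)) / (1 + g p * conj (g p)) ^ 2)
      (-(g p * conj g') / (1 + g p * conj (g p)) ^ 2) p := by
  have hw := hg.hasWirtingerDerivAt
  refine (((HasWirtingerDerivAt.const 1).add (hw.mul hw.conj)).inv
    (one_add_mul_conj_ne_zero (g p))).congr_deriv ?_ ?_ <;> simp

theorem stmt_17 (f : ℂ → ℂ) (hf : Differentiable ℂ f)
    (α β : ℂ → ℂ → ℂ)
    (hα : α = fun p u =>
      (f p * (starRingEnd ℂ) (deriv f p * u)
        - (starRingEnd ℂ) (f p) * (deriv f p * u)) /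
          (2 * (1 + ‖f p‖ ^ 2)))
    (hβ : β = fun p u =>
      (-Complex.I * (deriv f p * u)) / (1 + ‖f p‖ ^ 2)) :
    ∀ p u v : ℂ,
      extDer α p u v =
        β p u * (starRingEnd ℂ) (β p v) - β p v * (starRingEnd ℂ) (β p u) ∧
      extDer β p u v = 2 * (β p u * α p v - β p v * α p u) := by
  have hα_dz : ∀ q u, α q u = (-1 / 2 * conj (f q) * deriv f q * (1 + f q * conj (f q))⁻¹) * u
      + (1 / 2 * f q * conj (deriv f q) * (1 + f q * conj (f q))⁻¹) * conj u := by
    intro q u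
    have hN_ne := one_add_mul_conj_ne_zero (f q)
    simp only [hα, ← Complex.mul_conj', map_mul]
    field_simp
    ring
  have hβ_dz : ∀ q u, β q u = (-Complex.I * deriv f q * (1 + f q * conj (f q))⁻¹) * u
      + 0 * conj u := by
    intro q u
    simp only [hβ, ← Complex.mul_conj']
    ring
  intro p u v
  have hf_p := (hf p).hasDerivAt.hasWirtingerDerivAt
  have hf'_p := (hf.deriv p).hasDerivAt.hasWirtingerDerivAt
  have hN_p := (hf p).hasDerivAt.hasWirtingerDerivAt_inv_one_add_mul_conj
  have ha := (((HasWirtingerDerivAt.const (-1 / 2)).mul hf_p.conj).mul hf'_p).mul hN_p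
  have hb := (((HasWirtingerDerivAt.const (1 / 2)).mul hf_p).mul hf'_p.conj).mul hN_p
  have hc := ((HasWirtingerDerivAt.const (-Complex.I)).mul hf'_p).mul hN_p
  rw [extDer_eq_of_hasWirtingerDerivAt hα_dz ha hb,
    extDer_eq_of_hasWirtingerDerivAt hβ_dz hc (.const 0)]
  have hN_ne := one_add_mul_conj_ne_zero (f p)
  simp only [hα, hβ, ← Complex.mul_conj', map_div₀, map_mul, map_add, map_one, map_neg, map_zero,
    Complex.conj_I, Complex.conj_conj] at hN_ne ⊢
  constructor
  · field_simp
    simp only [Complex.I_sq]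
    ring
  · field_simp
    ring
end
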